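/- Assume (A4) and let β > 0. Let η* be a probability density on ℝ^d satisfying η*(θ) = exp(−βF'(η*)(θ))/Z₂(η*) for almost every θ, where Z₂(η*) := ∫exp(−βF'(η*)(θ))dθ, and define ρ*(θ,r) := (exp(−β|r|²/2)/Z₁)·η*(θ) with Z₁ := ∫exp(−β|r|²/2)dr. Then E(ρ*) is finite, and for every probability density ρ on ℝ^d × ℝ^d with ∫∫(g(θ)+|r|²/2)ρ dθdr < ∞ and Ψ Bochner integrable with respect to [ρ]^θ(θ)dθ (so that E(ρ) is well-defined in (−∞,∞]), one has E(ρ) ≥ E(ρ*). (Lemma D.1: the stationary density is the global minimizer of the free energy.) -/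

import Mathlib

open MeasureTheory Real
open scoped RealInnerProductSpace ENNReal

/-- Positive part `∫∫ ρ log⁺ ρ` of the negative entropy, valued in `[0,∞]`. -/
noncomputable def entP {d : ℕ}
    (ρ : EuclideanSpace ℝ (Fin d) × EuclideanSpace ℝ (Fin d) → ℝ) : ℝ≥0∞ :=
  ∫⁻ p, ENNReal.ofReal (ρ p * max (Real.log (ρ p)) 0)

/-- Negative part `∫∫ ρ log⁻ ρ` of the negative entropy, valued in `[0,∞]`. -/
noncomputable def entN {d : ℕ}
    (ρ : EuclideanSpace ℝ (Fin d) × EuclideanSpace ℝ (Fin d) → ℝ) : ℝ≥0∞ :=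
  ∫⁻ p, ENNReal.ofReal (ρ p * max (-Real.log (ρ p)) 0)

/-- The free energy `E(ρ) = F([ρ]^θ) + ∫∫(|r|²/2)ρ + β⁻¹∫∫ρ log ρ`, valued in `EReal`,
where `F(η) = R(⟨Ψ,η⟩) + ∫gη` and `[ρ]^θ(θ) = ∫ρ(θ,r)dr` is the `θ`-marginal. -/
noncomputable def fEnergy {d : ℕ} {F : Type*} [NormedAddCommGroup F]
    [InnerProductSpace ℝ F] [CompleteSpace F]
    (R : F → ℝ) (Ψ : EuclideanSpace ℝ (Fin d) → F) (g : EuclideanSpace ℝ (Fin d) → ℝ)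
    (β : ℝ) (ρ : EuclideanSpace ℝ (Fin d) × EuclideanSpace ℝ (Fin d) → ℝ) : EReal :=
  ((R (∫ θ, (∫ r, ρ (θ, r)) • Ψ θ) + (∫ θ, g θ * ∫ r, ρ (θ, r))
      + ∫ p, (‖p.2‖ ^ 2 / 2) * ρ p : ℝ) : EReal)
    + ((β⁻¹ : ℝ) : EReal) * ((entP ρ : ℝ≥0∞) : EReal)
    - ((β⁻¹ : ℝ) : EReal) * ((entN ρ : ℝ≥0∞) : EReal)

/-!
Put `w = ∇R(⟨Ψ, η*⟩)` and let `V(θ, r) = ⟪w, Ψ θ⟫ + g θ + |r|²/2` be the linearised potential.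
The fixed-point equation says exactly that `ρ* = exp(-βV)/Z` almost everywhere, and, writing
`m(ρ) = ⟨Ψ, [ρ]^θ⟩`, the free energy splits as
`E(ρ) = [R(m(ρ)) - ⟪w, m(ρ)⟫] + [∫ V ρ + β⁻¹ ∫ ρ log ρ]`.
The first bracket is minimal at `ρ*` by the first-order characterisation of convexity of `R`
(`w` is the gradient at `m(ρ*)`), the second by Gibbs' inequality `∫ ρ log ρ* ≤ ∫ ρ log ρ`,
since `log ρ* = -βV - log Z`. The negative part of the entropy of `ρ` is always finite, being
controlled by the moment `∫ (g + |r|²/2) ρ` and the integrability of `exp(-g)`; so either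
`ρ log ρ` is integrable and the splitting applies, or `E(ρ) = ⊤`.
-/

lemma mul_exp_neg_mul_le {b : ℝ} (hb : 0 < b) (x : ℝ) :
    x * exp (-b * x) ≤ 2 / b * exp (-(b / 2) * x) := by
  have hx : x ≤ 2 / b * exp (b / 2 * x) := by
    have := add_one_le_exp (b / 2 * x)
    rw [div_mul_eq_mul_div, le_div_iff₀ hb]
    nlinarith
  calc x * exp (-b * x) ≤ 2 / b * exp (b / 2 * x) * exp (-b * x) :=
        mul_le_mul_of_nonneg_right hx (exp_pos _).le
    _ = 2 / b * exp (-(b / 2) * x) := by rw [mul_assoc, ← exp_add]; ring_nf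

lemma sub_le_mul_log_sub_mul_log {x y : ℝ} (hx : 0 ≤ x) (hy : 0 < y) :
    x - y ≤ x * log x - x * log y := by
  have := mul_nonneg hy.le (InformationTheory.klFun_nonneg (div_nonneg hx hy.le))
  rcases hx.eq_or_lt with rfl | hx
  · simp [hy.le]
  rw [InformationTheory.klFun, log_div hx.ne' hy.ne'] at this
  field_simp at this
  linarith

lemma mul_max_neg_log_le {x V : ℝ} (hx : 0 ≤ x) (hV : 0 ≤ V) :
    x * max (-log x) 0 ≤ exp (-(V + 1)) + x * V := by
  have := sub_le_mul_log_sub_mul_log hx (exp_pos (-(V + 1)))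
  rw [log_exp] at this
  rcases le_total (-log x) 0 with h | h
  · rw [max_eq_right h, mul_zero]; positivity
  · rw [max_eq_left h]; linarith

lemma ConvexOn.sub_inner_le_of_hasGradientAt {F : Type*} [NormedAddCommGroup F]
    [InnerProductSpace ℝ F] [CompleteSpace F] {R : F → ℝ} (hR : ConvexOn ℝ Set.univ R)
    {x v : F} (hRx : HasGradientAt R v x) (y : F) : R x - ⟪v, x⟫ ≤ R y - ⟪v, y⟫ := by
  set ℓ : ℝ →ᵃ[ℝ] F := AffineMap.lineMap x y
  have hderiv : HasDerivAt (R ∘ ℓ) ⟪v, y - x⟫ 0 := by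
    have hℓ : HasDerivAt ℓ (y - x) 0 := AffineMap.hasDerivAt_lineMap
    have hRℓ : HasGradientAt R v (ℓ 0) := (AffineMap.lineMap_apply_zero (k := ℝ) x y).symm ▸ hRx
    simpa using hRℓ.hasFDerivAt.comp_hasDerivAt 0 hℓ
  have := (hR.comp_affineMap ℓ).le_slope_of_hasDerivAt (Set.mem_univ 0) (Set.mem_univ 1)
    zero_lt_one hderiv
  simp [slope_def_field, ℓ, inner_sub_right] at this
  linarith

section Measure

variable {α : Type*} [MeasurableSpace α] {μ : Measure α}

lemma MeasureTheory.Integrable.mul_exp_neg_mul {f : α → ℝ} {b : ℝ} (hb : 0 < b)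
    (hf : AEStronglyMeasurable f μ) (hf0 : ∀ x, 0 ≤ f x)
    (hexp : Integrable (fun x => exp (-(b / 2) * f x)) μ) :
    Integrable (fun x => f x * exp (-b * f x)) μ := by
  refine (hexp.const_mul (2 / b)).mono' (hf.mul (by fun_prop)) (ae_of_all _ fun x => ?_)
  rw [norm_of_nonneg (by have := hf0 x; positivity)]
  exact mul_exp_neg_mul_le hb (f x)

lemma MeasureTheory.Integrable.mul_exp_neg_mul_add {u g h : α → ℝ} {b M : ℝ} (hb : 0 ≤ b)
    (hu : Integrable (fun x => u x * exp (-b * g x)) μ)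
    (hh : AEStronglyMeasurable h μ) (hhM : ∀ x, |h x| ≤ M) :
    Integrable (fun x => u x * exp (-b * (h x + g x))) μ := by
  have hbdd : ∀ x, ‖exp (-b * h x)‖ ≤ exp (b * M) := fun x => by
    rw [norm_of_nonneg (exp_pos _).le, exp_le_exp]
    nlinarith [neg_abs_le (h x), hhM x]
  refine (hu.bdd_mul (by fun_prop) (ae_of_all _ hbdd)).congr (ae_of_all _ fun x => ?_)
  simp only [mul_add, exp_add]
  ring

lemma boltzmann_normalizer_pos_and_integrable [NeZero μ] {h g η : α → ℝ} {M β : ℝ}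
    (hβ : 0 < β) (hh : AEStronglyMeasurable h μ) (hhM : ∀ x, |h x| ≤ M)
    (hg : AEStronglyMeasurable g μ) (hg0 : ∀ x, 0 ≤ g x)
    (hgexp : ∀ b, 0 < b → Integrable (fun x => exp (-b * g x)) μ)
    (hη : ∀ᵐ x ∂μ, η x = exp (-β * (h x + g x)) / ∫ x', exp (-β * (h x' + g x')) ∂μ) :
    0 < ∫ x, exp (-β * (h x + g x)) ∂μ ∧ Integrable (fun x => g x * η x) μ := by
  have hZ : Integrable (fun x => exp (-β * (h x + g x))) μ := by
    simpa using ((hgexp β hβ).const_mul 1).mul_exp_neg_mul_add hβ.le hh hhM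
  have hgZ : Integrable (fun x => g x * exp (-β * (h x + g x))) μ :=
    ((hgexp (β / 2) (half_pos hβ)).mul_exp_neg_mul hβ hg hg0).mul_exp_neg_mul_add hβ.le hh hhM
  refine ⟨integral_exp_pos hZ, (hgZ.div_const (∫ x, exp (-β * (h x + g x)) ∂μ)).congr ?_⟩
  filter_upwards [hη] with x hx
  rw [hx, mul_div_assoc]

theorem integral_mul_log_le_integral_mul_log {ρ σ : α → ℝ} (hρ0 : 0 ≤ᵐ[μ] ρ)
    (hσ0 : ∀ᵐ x ∂μ, 0 < σ x) (hρ : Integrable ρ μ) (hσ : Integrable σ μ)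
    (hmass : ∫ x, σ x ∂μ ≤ ∫ x, ρ x ∂μ)
    (hρρ : Integrable (fun x => ρ x * log (ρ x)) μ)
    (hρσ : Integrable (fun x => ρ x * log (σ x)) μ) :
    ∫ x, ρ x * log (σ x) ∂μ ≤ ∫ x, ρ x * log (ρ x) ∂μ := by
  have : ∫ x, ρ x - σ x ∂μ ≤ ∫ x, ρ x * log (ρ x) - ρ x * log (σ x) ∂μ :=
    integral_mono_ae (hρ.sub hσ) (hρρ.sub hρσ) <| by
      filter_upwards [hρ0, hσ0] with x hρx hσx
      exact sub_le_mul_log_sub_mul_log hρx hσx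
  rw [integral_sub hρ hσ, integral_sub hρρ hρσ] at this
  linarith

lemma integral_mul_log_boltzmann {ρ σ V : α → ℝ} {β Z : ℝ} (hZ : 0 < Z)
    (hσ : ∀ᵐ x ∂μ, σ x = exp (-β * V x) / Z) (hρ : Integrable ρ μ)
    (hVρ : Integrable (fun x => V x * ρ x) μ) :
    Integrable (fun x => ρ x * log (σ x)) μ ∧
      ∫ x, ρ x * log (σ x) ∂μ = -β * ∫ x, V x * ρ x ∂μ - log Z * ∫ x, ρ x ∂μ := by
  have hlog : (fun x => ρ x * log (σ x)) =ᵐ[μ] fun x => -β * (V x * ρ x) - log Z * ρ x := by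
    filter_upwards [hσ] with x hx
    rw [hx, log_div (exp_pos _).ne' hZ.ne', log_exp]
    ring
  have hint := (hVρ.const_mul (-β)).sub (hρ.const_mul (log Z))
  refine ⟨hint.congr hlog.symm, ?_⟩
  rw [integral_congr_ae hlog, integral_sub (hVρ.const_mul _) (hρ.const_mul _),
    integral_const_mul, integral_const_mul]

theorem boltzmann_free_energy_le {ρ σ V : α → ℝ} {β Z : ℝ} (hβ : 0 < β) (hZ : 0 < Z)
    (hσ : ∀ᵐ x ∂μ, σ x = exp (-β * V x) / Z) (hσi : Integrable σ μ)
    (hVσ : Integrable (fun x => V x * σ x) μ) (hρ0 : 0 ≤ᵐ[μ] ρ) (hρ : Integrable ρ μ)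
    (hVρ : Integrable (fun x => V x * ρ x) μ) (hmass : ∫ x, ρ x ∂μ = ∫ x, σ x ∂μ)
    (hρρ : Integrable (fun x => ρ x * log (ρ x)) μ) :
    ∫ x, V x * σ x ∂μ + β⁻¹ * ∫ x, σ x * log (σ x) ∂μ ≤
      ∫ x, V x * ρ x ∂μ + β⁻¹ * ∫ x, ρ x * log (ρ x) ∂μ := by
  obtain ⟨-, hσσ⟩ := integral_mul_log_boltzmann hZ hσ hσi hVσ
  obtain ⟨hρσi, hρσ⟩ := integral_mul_log_boltzmann hZ hσ hρ hVρ
  have hσ0 : ∀ᵐ x ∂μ, 0 < σ x := by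
    filter_upwards [hσ] with x hx
    rw [hx]; positivity
  have hgibbs := integral_mul_log_le_integral_mul_log hρ0 hσ0 hρ hσi hmass.ge hρρ hρσi
  rw [hσσ, ← hmass]
  rw [hρσ] at hgibbs
  have := mul_le_mul_of_nonneg_left hgibbs (inv_pos.2 hβ).le
  field_simp at this ⊢
  linarith

end Measure

lemma integral_comp_fst_mul {α β : Type*} [MeasureSpace α] [MeasureSpace β]
    [SFinite (volume : Measure α)] [SFinite (volume : Measure β)] (q : α → ℝ) {ρ : α × β → ℝ}
    (h : Integrable fun p => q p.1 * ρ p) :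
    ∫ p, q p.1 * ρ p = ∫ x, q x * ∫ y, ρ (x, y) := by
  rw [Measure.volume_eq_prod] at h ⊢
  rw [integral_prod _ h]
  simp_rw [integral_const_mul]

lemma integrable_exp_neg_mul_sq_norm {V : Type*} [NormedAddCommGroup V] [InnerProductSpace ℝ V]
    [FiniteDimensional ℝ V] [MeasurableSpace V] [BorelSpace V] {b : ℝ} (hb : 0 < b) :
    Integrable fun v : V => exp (-b * ‖v‖ ^ 2) := by
  refine (GaussianFourier.integrable_cexp_neg_mul_sq_norm_add (V := V) (b := b)
    (by simpa using hb) 0 0).norm.congr (ae_of_all _ fun v => ?_)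
  simp only [Complex.norm_exp]
  norm_cast
  simp

section FreeEnergy

variable {d : ℕ} {ρ : EuclideanSpace ℝ (Fin d) × EuclideanSpace ℝ (Fin d) → ℝ}

lemma entP_eq_lintegral (hρ0 : 0 ≤ ρ) :
    entP ρ = ∫⁻ p, ENNReal.ofReal (ρ p * log (ρ p)) := by
  refine lintegral_congr fun p => ?_
  rcases le_total (log (ρ p)) 0 with h | h
  · rw [max_eq_right h, mul_zero, ENNReal.ofReal_zero,
      ENNReal.ofReal_of_nonpos (mul_nonpos_of_nonneg_of_nonpos (hρ0 p) h)]
  · rw [max_eq_left h]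

lemma entN_eq_lintegral (hρ0 : 0 ≤ ρ) :
    entN ρ = ∫⁻ p, ENNReal.ofReal (-(ρ p * log (ρ p))) := by
  refine lintegral_congr fun p => ?_
  rcases le_total (-log (ρ p)) 0 with h | h
  · rw [max_eq_right h, mul_zero, ENNReal.ofReal_zero, ← mul_neg,
      ENNReal.ofReal_of_nonpos (mul_nonpos_of_nonneg_of_nonpos (hρ0 p) h)]
  · rw [max_eq_left h, mul_neg]

lemma integrable_mul_log_iff (hm : AEMeasurable (fun p => ρ p * log (ρ p))) (hρ0 : 0 ≤ ρ) :
    Integrable (fun p => ρ p * log (ρ p)) ↔ entP ρ ≠ ⊤ ∧ entN ρ ≠ ⊤ := by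
  have henorm : ∀ x : ℝ, ‖x‖ₑ = ENNReal.ofReal x + ENNReal.ofReal (-x) := fun x => by
    rcases le_total x 0 with h | h
    · simp [enorm_eq_ofReal_abs, abs_of_nonpos h, ENNReal.ofReal_of_nonpos h]
    · simp [enorm_eq_ofReal_abs, abs_of_nonneg h, ENNReal.ofReal_of_nonpos (neg_nonpos.2 h)]
  simp only [Integrable, hm.aestronglyMeasurable, true_and, hasFiniteIntegral_iff_enorm,
    henorm, entP_eq_lintegral hρ0, entN_eq_lintegral hρ0,
    lintegral_add_left' hm.ennreal_ofReal, lt_top_iff_ne_top, ENNReal.add_ne_top]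

variable {F : Type*} [NormedAddCommGroup F] [InnerProductSpace ℝ F]

/-- For `w = ∇R(⟨Ψ, η*⟩)` the `θ`-part `⟪w, Ψ θ⟫ + g θ` is the first variation `F'(η*)(θ)`. -/
noncomputable def gibbsPotential (w : F) (Ψ : EuclideanSpace ℝ (Fin d) → F)
    (g : EuclideanSpace ℝ (Fin d) → ℝ)
    (p : EuclideanSpace ℝ (Fin d) × EuclideanSpace ℝ (Fin d)) : ℝ :=
  ⟪w, Ψ p.1⟫ + g p.1 + ‖p.2‖ ^ 2 / 2

variable {Ψ : EuclideanSpace ℝ (Fin d) → F} {g : EuclideanSpace ℝ (Fin d) → ℝ} {β : ℝ}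
  {w : F} {M : ℝ}

lemma entN_ne_top (hg0 : ∀ θ, 0 ≤ g θ)
    (hgexp : Integrable fun θ => exp (-1 * g θ)) (hρ0 : 0 ≤ ρ)
    (hρk : Integrable fun p => (g p.1 + ‖p.2‖ ^ 2 / 2) * ρ p) : entN ρ ≠ ⊤ := by
  have hbound : Integrable fun p : EuclideanSpace ℝ (Fin d) × EuclideanSpace ℝ (Fin d) =>
      exp (-(g p.1 + ‖p.2‖ ^ 2 / 2 + 1)) + ρ p * (g p.1 + ‖p.2‖ ^ 2 / 2) := by
    refine .add ?_ (hρk.congr (ae_of_all _ fun p => mul_comm _ _))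
    refine (hgexp.mul_prod ((integrable_exp_neg_mul_sq_norm (V := EuclideanSpace ℝ (Fin d))
      (b := 1 / 2) (by norm_num)).const_mul (exp (-1)))).congr (ae_of_all _ fun p => ?_)
    simp only [← exp_add]
    ring_nf
  refine ne_top_of_le_ne_top hbound.lintegral_lt_top.ne (lintegral_mono fun p => ?_)
  exact ENNReal.ofReal_le_ofReal
    (mul_max_neg_log_le (hρ0 p) (add_nonneg (hg0 p.1) (by positivity)))

lemma integrable_potential_terms (hw : ∀ θ, |⟪w, Ψ θ⟫| ≤ M)
    (hwm : Measurable fun θ => ⟪w, Ψ θ⟫) (hg0 : ∀ θ, 0 ≤ g θ) (hgm : Measurable g)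
    (hρ0 : 0 ≤ ρ) (hρ : Integrable ρ) (hρk : Integrable fun p => (g p.1 + ‖p.2‖ ^ 2 / 2) * ρ p) :
    Integrable (fun p => ⟪w, Ψ p.1⟫ * ρ p) ∧ Integrable (fun p => g p.1 * ρ p) ∧
      Integrable (fun p => ‖p.2‖ ^ 2 / 2 * ρ p) := by
  have hdom : ∀ {a b : ℝ}, 0 ≤ a → 0 ≤ b → ∀ p, ‖a * ρ p‖ ≤ (a + b) * ρ p := by
    intro a b ha hb p
    rw [norm_of_nonneg (mul_nonneg ha (hρ0 p))]
    exact mul_le_mul_of_nonneg_right (le_add_of_nonneg_right hb) (hρ0 p)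
  refine ⟨hρ.bdd_mul (hwm.comp measurable_fst).aestronglyMeasurable
      (ae_of_all _ fun p => (norm_eq_abs _).trans_le (hw p.1)),
    hρk.mono' ((hgm.comp measurable_fst).aestronglyMeasurable.mul hρ.1)
      (ae_of_all _ fun p => hdom (hg0 p.1) (by positivity : (0 : ℝ) ≤ ‖p.2‖ ^ 2 / 2) p),
    hρk.mono' (by fun_prop) (ae_of_all _ fun p => ?_)⟩
  rw [add_comm (g p.1)]
  exact hdom (by positivity) (hg0 _) p

lemma integrable_gibbsPotential_mul (hw : ∀ θ, |⟪w, Ψ θ⟫| ≤ M)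
    (hwm : Measurable fun θ => ⟪w, Ψ θ⟫) (hg0 : ∀ θ, 0 ≤ g θ) (hgm : Measurable g)
    (hρ0 : 0 ≤ ρ) (hρ : Integrable ρ) (hρk : Integrable fun p => (g p.1 + ‖p.2‖ ^ 2 / 2) * ρ p) :
    Integrable fun p => gibbsPotential w Ψ g p * ρ p := by
  obtain ⟨hh, hg, hk⟩ := integrable_potential_terms hw hwm hg0 hgm hρ0 hρ hρk
  refine ((hh.add hg).add hk).congr (ae_of_all _ fun p => ?_)
  simp only [Pi.add_apply, gibbsPotential]
  ring

lemma stationary_density_properties (hw : ∀ θ, |⟪w, Ψ θ⟫| ≤ M)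
    (hwm : Measurable fun θ => ⟪w, Ψ θ⟫) (hg0 : ∀ θ, 0 ≤ g θ) (hgm : Measurable g)
    (hgexp : ∀ b : ℝ, 0 < b → Integrable fun θ => exp (-b * g θ)) (hβ : 0 < β)
    {η : EuclideanSpace ℝ (Fin d) → ℝ} (hη0 : 0 ≤ η) (hηi : Integrable η) (hη1 : ∫ θ, η θ = 1)
    (hfix : ∀ᵐ θ, η θ = exp (-β * (⟪w, Ψ θ⟫ + g θ)) / ∫ θ', exp (-β * (⟪w, Ψ θ'⟫ + g θ')))
    (hρ : ∀ p, ρ p = (exp (-β * ‖p.2‖ ^ 2 / 2) /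
      ∫ r : EuclideanSpace ℝ (Fin d), exp (-β * ‖r‖ ^ 2 / 2)) * η p.1) :
    0 ≤ ρ ∧ Integrable ρ ∧ (∀ θ, ∫ r, ρ (θ, r) = η θ) ∧ ∫ p, ρ p = 1 ∧
      (Integrable fun p => (g p.1 + ‖p.2‖ ^ 2 / 2) * ρ p) ∧
      ∃ Z, 0 < Z ∧ ∀ᵐ p, ρ p = exp (-β * gibbsPotential w Ψ g p) / Z := by
  set Z₁ := ∫ r : EuclideanSpace ℝ (Fin d), exp (-β * ‖r‖ ^ 2 / 2)
  have hG : Integrable fun r : EuclideanSpace ℝ (Fin d) => exp (-β * ‖r‖ ^ 2 / 2) :=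
    (integrable_exp_neg_mul_sq_norm (half_pos hβ)).congr (ae_of_all _ fun r => by ring_nf)
  have hG' : Integrable fun r : EuclideanSpace ℝ (Fin d) => exp (-(β / 2) * (‖r‖ ^ 2 / 2)) :=
    (integrable_exp_neg_mul_sq_norm (by positivity : 0 < β / 4)).congr
      (ae_of_all _ fun r => by ring_nf)
  have hkG : Integrable fun r : EuclideanSpace ℝ (Fin d) =>
      ‖r‖ ^ 2 / 2 * exp (-β * ‖r‖ ^ 2 / 2) :=
    (hG'.mul_exp_neg_mul hβ (by fun_prop) fun r => by positivity).congr
      (ae_of_all _ fun r => by ring_nf)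
  have hZ₁ : 0 < Z₁ := integral_exp_pos hG
  obtain ⟨hZ₂, hgη⟩ := boltzmann_normalizer_pos_and_integrable hβ hwm.aestronglyMeasurable hw
    hgm.aestronglyMeasurable hg0 hgexp hfix
  have hmarg : ∀ θ, ∫ r, ρ (θ, r) = η θ := fun θ => by
    simp only [hρ]
    rw [integral_mul_const, integral_div, div_self hZ₁.ne', one_mul]
  have hρi : Integrable ρ :=
    (hηi.mul_prod (hG.div_const Z₁)).congr (ae_of_all _ fun p => by rw [hρ, mul_comm])
  refine ⟨fun p => ?_, hρi, hmarg, ?_, ?_, _, mul_pos hZ₁ hZ₂, ?_⟩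
  · rw [hρ]
    exact mul_nonneg (div_nonneg (exp_pos _).le hZ₁.le) (hη0 _)
  · rw [Measure.volume_eq_prod] at hρi ⊢
    rw [integral_prod _ hρi]
    simp_rw [hmarg]
    exact hη1
  · refine ((hgη.mul_prod (hG.div_const Z₁)).add (hηi.mul_prod (hkG.div_const Z₁))).congr
      (ae_of_all _ fun p => ?_)
    simp only [Pi.add_apply, hρ]
    ring
  · filter_upwards [Measure.quasiMeasurePreserving_fst.ae hfix] with p hp
    rw [hρ, hp, div_mul_div_comm, ← exp_add, gibbsPotential]
    ring_nf

variable [CompleteSpace F] {R : F → ℝ}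

lemma fEnergy_eq_top (hβ : 0 < β) (hP : entP ρ = ⊤) (hN : entN ρ ≠ ⊤) :
    fEnergy R Ψ g β ρ = ⊤ := by
  rw [fEnergy, hP, ← EReal.coe_ennreal_toReal hN, EReal.coe_ennreal_top,
    EReal.mul_top_of_pos (by exact_mod_cast inv_pos.2 hβ), EReal.add_top_of_ne_bot (by simp)]
  exact EReal.top_sub_coe _

lemma fEnergy_eq_coe (hρ0 : 0 ≤ ρ) (hent : Integrable fun p => ρ p * log (ρ p)) :
    fEnergy R Ψ g β ρ = ((R (∫ θ, (∫ r, ρ (θ, r)) • Ψ θ) + (∫ θ, g θ * ∫ r, ρ (θ, r))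
      + (∫ p, ‖p.2‖ ^ 2 / 2 * ρ p) + β⁻¹ * ∫ p, ρ p * log (ρ p) : ℝ) : EReal) := by
  obtain ⟨hP, hN⟩ := (integrable_mul_log_iff hent.aemeasurable hρ0).1 hent
  rw [fEnergy, ← EReal.coe_ennreal_toReal hP, ← EReal.coe_ennreal_toReal hN,
    integral_eq_lintegral_pos_part_sub_lintegral_neg_part hent, ← entP_eq_lintegral hρ0,
    ← entN_eq_lintegral hρ0]
  norm_cast
  ring

lemma fEnergy_eq_of_integrable (hw : ∀ θ, |⟪w, Ψ θ⟫| ≤ M)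
    (hwm : Measurable fun θ => ⟪w, Ψ θ⟫) (hg0 : ∀ θ, 0 ≤ g θ) (hgm : Measurable g)
    (hρ0 : 0 ≤ ρ) (hρ : Integrable ρ) (hρk : Integrable fun p => (g p.1 + ‖p.2‖ ^ 2 / 2) * ρ p)
    (hΨρ : Integrable fun θ => (∫ r, ρ (θ, r)) • Ψ θ)
    (hent : Integrable fun p => ρ p * log (ρ p)) :
    fEnergy R Ψ g β ρ = ((R (∫ θ, (∫ r, ρ (θ, r)) • Ψ θ) - ⟪w, ∫ θ, (∫ r, ρ (θ, r)) • Ψ θ⟫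
      + ((∫ p, gibbsPotential w Ψ g p * ρ p) + β⁻¹ * ∫ p, ρ p * log (ρ p)) : ℝ) : EReal) := by
  obtain ⟨hh, hg, hk⟩ := integrable_potential_terms hw hwm hg0 hgm hρ0 hρ hρk
  have hinner : ⟪w, ∫ θ, (∫ r, ρ (θ, r)) • Ψ θ⟫ = ∫ p, ⟪w, Ψ p.1⟫ * ρ p := by
    rw [← integral_inner hΨρ, integral_comp_fst_mul (fun θ => ⟪w, Ψ θ⟫) hh]
    simp_rw [real_inner_smul_right, mul_comm]
  have hV : ∫ p, gibbsPotential w Ψ g p * ρ p =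
      (∫ p, ⟪w, Ψ p.1⟫ * ρ p) + (∫ p, g p.1 * ρ p) + ∫ p, ‖p.2‖ ^ 2 / 2 * ρ p := by
    simp only [gibbsPotential, add_mul]
    rw [integral_add _ hk, integral_add hh hg]
    exact hh.add hg
  rw [fEnergy_eq_coe hρ0 hent, ← integral_comp_fst_mul g hg, hinner, hV]
  ring_nf

end FreeEnergy

theorem stmt_7_general {d : ℕ} {F : Type*} [NormedAddCommGroup F] [InnerProductSpace ℝ F]
    [CompleteSpace F]
    (R : F → ℝ) (hRconv : ConvexOn ℝ Set.univ R)
    (gradR : F → F) (hgradR : ∀ ψ, HasGradientAt R (gradR ψ) ψ)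
    (Ψ : EuclideanSpace ℝ (Fin d) → F)
    (g : EuclideanSpace ℝ (Fin d) → ℝ) (hg0 : ∀ θ, 0 ≤ g θ)
    -- (A4)
    (hA4int : ∀ ρ : EuclideanSpace ℝ (Fin d) → ℝ,
      Integrable ρ → 0 ≤ ρ → (∫ θ, ρ θ) ≤ 1 → Integrable fun θ => ρ θ • Ψ θ)
    (M₀ : ℝ)
    (hA4bdd : ∀ ρ : EuclideanSpace ℝ (Fin d) → ℝ,
      Integrable ρ → 0 ≤ ρ → (∫ θ, ρ θ) ≤ 1 →
        ∀ θ, |⟪gradR (∫ t, ρ t • Ψ t), Ψ θ⟫| ≤ M₀)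
    (hA4equi : ∀ ε : ℝ, 0 < ε → ∃ δ : ℝ, 0 < δ ∧
      ∀ ρ : EuclideanSpace ℝ (Fin d) → ℝ,
        Integrable ρ → 0 ≤ ρ → (∫ θ, ρ θ) ≤ 1 →
          ∀ θ θ' : EuclideanSpace ℝ (Fin d), dist θ θ' < δ →
            |⟪gradR (∫ t, ρ t • Ψ t), Ψ θ⟫ - ⟪gradR (∫ t, ρ t • Ψ t), Ψ θ'⟫| < ε)
    (hgdiff : Differentiable ℝ g)
    (hgexp : ∀ b : ℝ, 0 < b → Integrable fun θ => Real.exp (-b * g θ))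
    (β : ℝ) (hβ : 0 < β)
    (ηs : EuclideanSpace ℝ (Fin d) → ℝ)
    (hη0 : 0 ≤ ηs) (hηint : Integrable ηs)
    (hη1 : (∫ θ, ηs θ) = 1)
    (hfix : ∀ᵐ θ ∂(volume : Measure (EuclideanSpace ℝ (Fin d))),
      ηs θ = Real.exp (-β * (⟪gradR (∫ t, ηs t • Ψ t), Ψ θ⟫ + g θ)) /
        ∫ θ', Real.exp (-β * (⟪gradR (∫ t, ηs t • Ψ t), Ψ θ'⟫ + g θ'))) :
    let ρs : EuclideanSpace ℝ (Fin d) × EuclideanSpace ℝ (Fin d) → ℝ :=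
      fun p => (Real.exp (-β * ‖p.2‖ ^ 2 / 2) /
        ∫ r : EuclideanSpace ℝ (Fin d), Real.exp (-β * ‖r‖ ^ 2 / 2)) * ηs p.1
    fEnergy R Ψ g β ρs ≠ ⊤ ∧ fEnergy R Ψ g β ρs ≠ ⊥ ∧
    ∀ ρ : EuclideanSpace ℝ (Fin d) × EuclideanSpace ℝ (Fin d) → ℝ,
      Measurable ρ → 0 ≤ ρ → Integrable ρ → (∫ p, ρ p) = 1 →
      (Integrable fun p : EuclideanSpace ℝ (Fin d) × EuclideanSpace ℝ (Fin d) =>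
        (g p.1 + ‖p.2‖ ^ 2 / 2) * ρ p) →
      (Integrable fun θ => (∫ r, ρ (θ, r)) • Ψ θ) →
      fEnergy R Ψ g β ρs ≤ fEnergy R Ψ g β ρ := by
  intro ρs
  set w := gradR (∫ t, ηs t • Ψ t)
  have hw : ∀ θ, |⟪w, Ψ θ⟫| ≤ M₀ := hA4bdd ηs hηint hη0 hη1.le
  have hwm : Measurable fun θ => ⟪w, Ψ θ⟫ :=
    (Metric.uniformContinuous_iff.2 fun ε hε => (hA4equi ε hε).imp fun _ ⟨hδ, h⟩ =>
      ⟨hδ, fun {θ θ'} => h ηs hηint hη0 hη1.le θ θ'⟩).continuous.measurable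
  have hgm : Measurable g := hgdiff.continuous.measurable
  obtain ⟨hρs0, hρsi, hmarg, hρs1, hρsk, Z, hZ, hρsZ⟩ :=
    stationary_density_properties (ρ := ρs) hw hwm hg0 hgm hgexp hβ hη0 hηint hη1 hfix
      fun _ => rfl
  have hms : ∫ θ, (∫ r, ρs (θ, r)) • Ψ θ = ∫ t, ηs t • Ψ t := by simp_rw [hmarg]
  have hΨs : Integrable fun θ => (∫ r, ρs (θ, r)) • Ψ θ := by
    simpa only [hmarg] using hA4int ηs hηint hη0 hη1.le
  have hVs := integrable_gibbsPotential_mul hw hwm hg0 hgm hρs0 hρsi hρsk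
  have hEs := fEnergy_eq_of_integrable (R := R) (β := β) hw hwm hg0 hgm hρs0 hρsi hρsk hΨs
    (integral_mul_log_boltzmann hZ hρsZ hρsi hVs).1
  refine ⟨hEs ▸ EReal.coe_ne_top _, hEs ▸ EReal.coe_ne_bot _, fun ρ hρm hρ0 hρi hρ1 hρk hΨρ => ?_⟩
  have hN := entN_ne_top hg0 (hgexp 1 one_pos) hρ0 hρk
  by_cases hP : entP ρ = ⊤
  · rw [fEnergy_eq_top hβ hP hN]
    exact le_top
  have hent := (integrable_mul_log_iff (hρm.mul (measurable_log.comp hρm)).aemeasurable hρ0).2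
    ⟨hP, hN⟩
  rw [hEs, fEnergy_eq_of_integrable hw hwm hg0 hgm hρ0 hρi hρk hΨρ hent, EReal.coe_le_coe_iff]
  gcongr ?_ + ?_
  · rw [hms]
    exact hRconv.sub_inner_le_of_hasGradientAt (hgradR _) _
  · exact boltzmann_free_energy_le hβ hZ hρsZ hρsi hVs (ae_of_all _ hρ0) hρi
      (integrable_gibbsPotential_mul hw hwm hg0 hgm hρ0 hρi hρk) (hρ1.trans hρs1.symm) hent

/-- Lemma D.1: assume (A4) and `β > 0`.  If `η*` is a probability
density solving the Boltzmann fixed point equation and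
`ρ*(θ,r) = (exp(−β|r|²/2)/Z₁)η*(θ)`, then `E(ρ*)` is finite and `E(ρ) ≥ E(ρ*)` for
every probability density `ρ` on `ℝ^d × ℝ^d` with `∫∫(g+|r|²/2)ρ < ∞` and `Ψ`
Bochner integrable against its `θ`-marginal. -/
theorem stmt_7 {d : ℕ} {F : Type*} [NormedAddCommGroup F] [InnerProductSpace ℝ F]
    [CompleteSpace F]
    (R : F → ℝ) (hR0 : ∀ ψ, 0 ≤ R ψ) (hRconv : ConvexOn ℝ Set.univ R)
    (gradR : F → F) (hgradR : ∀ ψ, HasGradientAt R (gradR ψ) ψ)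
    (Ψ : EuclideanSpace ℝ (Fin d) → F)
    (g : EuclideanSpace ℝ (Fin d) → ℝ) (hg0 : ∀ θ, 0 ≤ g θ)
    -- (A4)
    (hA4int : ∀ ρ : EuclideanSpace ℝ (Fin d) → ℝ,
      Integrable ρ → 0 ≤ ρ → (∫ θ, ρ θ) ≤ 1 → Integrable fun θ => ρ θ • Ψ θ)
    (M₀ : ℝ)
    (hA4bdd : ∀ ρ : EuclideanSpace ℝ (Fin d) → ℝ,
      Integrable ρ → 0 ≤ ρ → (∫ θ, ρ θ) ≤ 1 →
        ∀ θ, |⟪gradR (∫ t, ρ t • Ψ t), Ψ θ⟫| ≤ M₀)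
    (hA4equi : ∀ ε : ℝ, 0 < ε → ∃ δ : ℝ, 0 < δ ∧
      ∀ ρ : EuclideanSpace ℝ (Fin d) → ℝ,
        Integrable ρ → 0 ≤ ρ → (∫ θ, ρ θ) ≤ 1 →
          ∀ θ θ' : EuclideanSpace ℝ (Fin d), dist θ θ' < δ →
            |⟪gradR (∫ t, ρ t • Ψ t), Ψ θ⟫ - ⟪gradR (∫ t, ρ t • Ψ t), Ψ θ'⟫| < ε)
    (hgdiff : Differentiable ℝ g)
    (hgconf : Filter.Tendsto g (Filter.cocompact (EuclideanSpace ℝ (Fin d))) Filter.atTop)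
    (hgexp : ∀ b : ℝ, 0 < b → Integrable fun θ => Real.exp (-b * g θ))
    (β : ℝ) (hβ : 0 < β)
    (ηs : EuclideanSpace ℝ (Fin d) → ℝ)
    (hηmeas : Measurable ηs) (hη0 : 0 ≤ ηs) (hηint : Integrable ηs)
    (hη1 : (∫ θ, ηs θ) = 1)
    (hfix : ∀ᵐ θ ∂(volume : Measure (EuclideanSpace ℝ (Fin d))),
      ηs θ = Real.exp (-β * (⟪gradR (∫ t, ηs t • Ψ t), Ψ θ⟫ + g θ)) /
        ∫ θ', Real.exp (-β * (⟪gradR (∫ t, ηs t • Ψ t), Ψ θ'⟫ + g θ'))) :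
    let ρs : EuclideanSpace ℝ (Fin d) × EuclideanSpace ℝ (Fin d) → ℝ :=
      fun p => (Real.exp (-β * ‖p.2‖ ^ 2 / 2) /
        ∫ r : EuclideanSpace ℝ (Fin d), Real.exp (-β * ‖r‖ ^ 2 / 2)) * ηs p.1
    fEnergy R Ψ g β ρs ≠ ⊤ ∧ fEnergy R Ψ g β ρs ≠ ⊥ ∧
    ∀ ρ : EuclideanSpace ℝ (Fin d) × EuclideanSpace ℝ (Fin d) → ℝ,
      Measurable ρ → 0 ≤ ρ → Integrable ρ → (∫ p, ρ p) = 1 →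
      (Integrable fun p : EuclideanSpace ℝ (Fin d) × EuclideanSpace ℝ (Fin d) =>
        (g p.1 + ‖p.2‖ ^ 2 / 2) * ρ p) →
      (Integrable fun θ => (∫ r, ρ (θ, r)) • Ψ θ) →
      fEnergy R Ψ g β ρs ≤ fEnergy R Ψ g β ρ :=
  stmt_7_general R hRconv gradR hgradR Ψ g hg0 hA4int M₀ hA4bdd hA4equi hgdiff hgexp β hβ ηs hη0
    hηint hη1 hfix
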